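/- The average response time is an unbounded quantity: for every bound B there exists an infinite word over {r, g, i} whose average response time exceeds B. Consequently, no function on infinite words that is uniformly bounded (e.g., bounded by the maximum weight of a limit-average weighted automaton) can equal the average response time on all words. -/

import Mathlib

open Filter Finset

/-- The alphabet `{r, g, i}` of requests, grants and idle events. -/
inductive Letter : Type
  | r | g | i
deriving DecidableEq

/-- Response time at position `j`: the least `d > 0` with a grant at `j + d`. -/
noncomputable def respTime (w : ℕ → Letter) (j : ℕ) : ℕ :=
  sInf {d : ℕ | 0 < d ∧ w (j + d) = Letter.g}

/-- The position of the `k`-th request in `w`. -/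
noncomputable def reqPos (w : ℕ → Letter) (k : ℕ) : ℕ :=
  Nat.nth (fun j => w j = Letter.r) k

/-- Average response time: limsup of the averages of the response times of
the first `k` requests. -/
noncomputable def avgRespTime (w : ℕ → Letter) : ℝ :=
  Filter.limsup
    (fun k => (∑ i ∈ Finset.range k, (respTime w (reqPos w i) : ℝ)) / (k : ℝ)) atTop

/-- Every request is eventually granted. -/
def hasGrants (w : ℕ → Letter) : Prop :=
  ∀ j, w j = Letter.r → ∃ d, 0 < d ∧ w (j + d) = Letter.g

/-!
The word `(r iᴺ⁻¹ g)^ω` answers every request after exactly `N` steps, so its average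
response time is `N`; letting `N` grow beats any bound `B`, and hence any uniformly
bounded function.
-/

theorem avgRespTime_eq_of_forall_respTime_reqPos_eq {w : ℕ → Letter} {c : ℕ}
    (h : ∀ k, respTime w (reqPos w k) = c) : avgRespTime w = c := by
  have hconst : (fun k : ℕ => (∑ i ∈ range k, (respTime w (reqPos w i) : ℝ)) / k)
      =ᶠ[atTop] fun _ => (c : ℝ) := by
    filter_upwards [eventually_ne_atTop 0] with k hk
    simp only [h, sum_const, card_range, nsmul_eq_mul]
    field_simp
  rw [avgRespTime, limsup_congr hconst, limsup_const]

theorem add_mod_succ_of_mod_eq_zero {N j e : ℕ} (hj : j % (N + 1) = 0) (he : e ≤ N) :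
    (j + e) % (N + 1) = e := by
  rw [Nat.add_mod, hj, zero_add, Nat.mod_mod, Nat.mod_eq_of_lt (Nat.lt_succ_of_le he)]

def periodicWord (N : ℕ) (j : ℕ) : Letter :=
  if j % (N + 1) = 0 then Letter.r else if j % (N + 1) = N then Letter.g else Letter.i

section periodicWord

variable {N : ℕ}

theorem periodicWord_eq_r_iff (j : ℕ) : periodicWord N j = Letter.r ↔ j % (N + 1) = 0 := by
  unfold periodicWord
  split_ifs with h₀ <;> simp [h₀]

theorem periodicWord_eq_g_iff (hN : 0 < N) (j : ℕ) :
    periodicWord N j = Letter.g ↔ j % (N + 1) = N := by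
  unfold periodicWord
  split_ifs with h₀ h₁ <;> simp only [false_iff, true_iff] <;> omega

theorem respTime_periodicWord (hN : 0 < N) {j : ℕ} (hj : j % (N + 1) = 0) :
    respTime (periodicWord N) j = N := by
  refine IsLeast.csInf_eq ⟨⟨hN, ?_⟩, fun d ⟨_, hg⟩ => ?_⟩
  · exact (periodicWord_eq_g_iff hN _).2 (add_mod_succ_of_mod_eq_zero hj le_rfl)
  · by_contra! hlt
    rw [periodicWord_eq_g_iff hN, add_mod_succ_of_mod_eq_zero hj hlt.le] at hg
    omega

theorem hasGrants_periodicWord (hN : 0 < N) : hasGrants (periodicWord N) := by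
  intro j hj
  rw [periodicWord_eq_r_iff] at hj
  exact ⟨N, hN, (periodicWord_eq_g_iff hN _).2 (add_mod_succ_of_mod_eq_zero hj le_rfl)⟩

theorem setOf_periodicWord_eq_r_infinite : {j | periodicWord N j = Letter.r}.Infinite := by
  refine Set.infinite_of_injective_forall_mem (f := fun k => k * (N + 1)) ?_ fun k => ?_
  · exact fun a b h => Nat.eq_of_mul_eq_mul_right N.succ_pos h
  · simp [periodicWord_eq_r_iff]

theorem avgRespTime_periodicWord (hN : 0 < N) : avgRespTime (periodicWord N) = N :=
  avgRespTime_eq_of_forall_respTime_reqPos_eq fun k =>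
    respTime_periodicWord hN <| (periodicWord_eq_r_iff _).1 <|
      Nat.nth_mem_of_infinite setOf_periodicWord_eq_r_infinite k

end periodicWord

theorem exists_hasGrants_lt_avgRespTime (B : ℝ) :
    ∃ w : ℕ → Letter, hasGrants w ∧ B < avgRespTime w := by
  have hN : 0 < ⌈B⌉₊ + 1 := Nat.succ_pos _
  refine ⟨periodicWord (⌈B⌉₊ + 1), hasGrants_periodicWord hN, ?_⟩
  rw [avgRespTime_periodicWord hN, Nat.cast_succ]
  linarith [Nat.le_ceil B]

/-- The average response time is unbounded: it exceeds every bound `B` on some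
word, hence no uniformly bounded function on infinite words can equal the
average response time on all words. -/
theorem avgRespTime_unbounded :
    (∀ B : ℝ, ∃ w : ℕ → Letter, hasGrants w ∧ B < avgRespTime w)
    ∧ ∀ F : (ℕ → Letter) → ℝ, (∃ M : ℝ, ∀ w, |F w| ≤ M) →
        ¬ (∀ w : ℕ → Letter, hasGrants w → F w = avgRespTime w) := by
  refine ⟨exists_hasGrants_lt_avgRespTime, ?_⟩
  rintro F ⟨M, hM⟩ hF
  obtain ⟨w, hw, hMw⟩ := exists_hasGrants_lt_avgRespTime M
  linarith [hF w hw, hM w, le_abs_self (F w)]
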